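/- arXiv:1707.08712 — 3 statements merged into one kernel-verified Lean document; each statement's English description precedes it below -/
import Mathlib

section
/- Let X satisfy RIP of order k with constant δ_k, and let J₁, J₂ ⊂ [p] be disjoint index sets with |J₁ ∪ J₂| ≤ k. Then for any vector a, ‖X_{J₁}^T X_{J₂} a‖₂ ≤ δ_k ‖a‖₂. -/
open scoped Classical
open Matrix

noncomputable def norm2 {m : Type*} [Fintype m] (x : m → ℝ) : ℝ :=
  Real.sqrt (∑ i, (x i) ^ 2)

noncomputable def KSparse {p : ℕ} (k : ℕ) (b : Fin p → ℝ) : Prop :=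
  (Finset.univ.filter fun j => b j ≠ 0).card ≤ k

def RIPwith {n p : ℕ} (X : Matrix (Fin n) (Fin p) ℝ) (k : ℕ) (δ : ℝ) : Prop :=
  ∀ b : Fin p → ℝ, KSparse k b →
    (1 - δ) * (norm2 b) ^ 2 ≤ (norm2 (X.mulVec b)) ^ 2 ∧
    (norm2 (X.mulVec b)) ^ 2 ≤ (1 + δ) * (norm2 b) ^ 2

/-- The submatrix of `X` formed by the columns indexed by `J`. -/
def colSub {n p : ℕ} (X : Matrix (Fin n) (Fin p) ℝ) (J : Finset (Fin p)) :
    Matrix (Fin n) J ℝ :=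
  Matrix.of fun i j => X i (j : Fin p)

/-- The Moore–Penrose pseudoinverse `(X_Jᵀ X_J)⁻¹ X_Jᵀ` of the full-column-rank
submatrix `X_J`. -/
noncomputable def pinv {n p : ℕ} (X : Matrix (Fin n) (Fin p) ℝ) (J : Finset (Fin p)) :
    Matrix J (Fin n) ℝ :=
  ((colSub X J)ᵀ * colSub X J)⁻¹ * (colSub X J)ᵀ

/-- The orthogonal projection matrix `P_J = X_J X_J^†` onto `col(X_J)`. -/
noncomputable def projMat {n p : ℕ} (X : Matrix (Fin n) (Fin p) ℝ) (J : Finset (Fin p)) :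
    Matrix (Fin n) (Fin n) ℝ :=
  colSub X J * pinv X J

/-! ### Auxiliary material -/

/-- Extend a vector indexed by `J` to a vector on `Fin p` by zero. -/
noncomputable def emb {p : ℕ} (J : Finset (Fin p)) (u : J → ℝ) : Fin p → ℝ :=
  fun j => if h : j ∈ J then u ⟨j, h⟩ else 0

lemma norm2_nonneg {m : Type*} [Fintype m] (x : m → ℝ) : 0 ≤ norm2 x :=
  Real.sqrt_nonneg _

lemma norm2_sq {m : Type*} [Fintype m] (x : m → ℝ) :
    norm2 x ^ 2 = ∑ i, (x i) ^ 2 :=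
  Real.sq_sqrt (Finset.sum_nonneg fun i _ => sq_nonneg _)

lemma mulVec_emb {n p : ℕ} (X : Matrix (Fin n) (Fin p) ℝ) (J : Finset (Fin p))
    (u : J → ℝ) : X.mulVec (emb J u) = (colSub X J).mulVec u := by
  funext i
  simp only [Matrix.mulVec, dotProduct, colSub, Matrix.of_apply]
  rw [Finset.univ_eq_attach]
  calc ∑ j : Fin p, X i j * emb J u j
      = ∑ j ∈ J, X i j * emb J u j := by
        refine (Finset.sum_subset (Finset.subset_univ J) ?_).symm
        intro j _ hj
        simp [emb, hj]
    _ = ∑ j ∈ J.attach, X i (j : Fin p) * emb J u (j : Fin p) :=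
        (Finset.sum_attach J fun j => X i j * emb J u j).symm
    _ = ∑ j ∈ J.attach, X i (j : Fin p) * u j := by
        refine Finset.sum_congr rfl fun j _ => ?_
        simp [emb, j.2]

lemma sq_sum_emb {p : ℕ} (J : Finset (Fin p)) (u : J → ℝ) :
    ∑ j, (emb J u j) ^ 2 = ∑ j : J, (u j) ^ 2 := by
  rw [Finset.univ_eq_attach (s := J)]
  calc ∑ j : Fin p, (emb J u j) ^ 2
      = ∑ j ∈ J, (emb J u j) ^ 2 := by
        refine (Finset.sum_subset (Finset.subset_univ J) ?_).symm
        intro j _ hj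
        simp [emb, hj]
    _ = ∑ j ∈ J.attach, (emb J u (j : Fin p)) ^ 2 :=
        (Finset.sum_attach J fun j => (emb J u j) ^ 2).symm
    _ = ∑ j ∈ J.attach, (u j) ^ 2 := by
        refine Finset.sum_congr rfl fun j _ => ?_
        simp [emb, j.2]

lemma emb_mul_emb {p : ℕ} {J1 J2 : Finset (Fin p)} (hdisj : Disjoint J1 J2)
    (u : J1 → ℝ) (v : J2 → ℝ) (j : Fin p) : emb J1 u j * emb J2 v j = 0 := by
  by_cases h1 : j ∈ J1
  · have h2 : j ∉ J2 := fun h2 => (Finset.disjoint_left.mp hdisj) h1 h2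
    simp [emb, h2]
  · simp [emb, h1]

lemma ksparse_of_support {p k : ℕ} {J1 J2 : Finset (Fin p)}
    (hcard : (J1 ∪ J2).card ≤ k) (b : Fin p → ℝ)
    (h : ∀ j, j ∉ J1 ∪ J2 → b j = 0) : KSparse k b := by
  unfold KSparse
  refine le_trans (Finset.card_le_card ?_) hcard
  intro j hj
  simp only [Finset.mem_filter, Finset.mem_univ, true_and] at hj
  by_contra hn
  exact hj (h j hn)

/-- Cross inner product bound from RIP. -/
lemma cross_bound {n p k : ℕ} {δ : ℝ} (X : Matrix (Fin n) (Fin p) ℝ)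
    (hRIP : RIPwith X k δ) {J1 J2 : Finset (Fin p)} (hdisj : Disjoint J1 J2)
    (hcard : (J1 ∪ J2).card ≤ k) (u : J1 → ℝ) (v : J2 → ℝ) :
    ∑ i, ((colSub X J1).mulVec u) i * ((colSub X J2).mulVec v) i ≤
      δ * ((∑ j : J1, (u j) ^ 2) + (∑ j : J2, (v j) ^ 2)) / 2 := by
  set b1 := emb J1 u with hb1
  set b2 := emb J2 v with hb2
  have hzero : ∀ j, j ∉ J1 ∪ J2 → b1 j = 0 ∧ b2 j = 0 := by
    intro j hj
    rw [Finset.mem_union] at hj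
    push_neg at hj
    constructor <;> simp [hb1, hb2, emb, hj.1, hj.2]
  have hs1 : KSparse k (b1 + b2) :=
    ksparse_of_support hcard _ fun j hj => by
      simp [Pi.add_apply, (hzero j hj).1, (hzero j hj).2]
  have hs2 : KSparse k (b1 - b2) :=
    ksparse_of_support hcard _ fun j hj => by
      simp [Pi.sub_apply, (hzero j hj).1, (hzero j hj).2]
  set S := (∑ j : J1, (u j) ^ 2) + (∑ j : J2, (v j) ^ 2) with hS
  have hcross0 : ∑ j, b1 j * b2 j = 0 :=
    Finset.sum_eq_zero fun j _ => emb_mul_emb hdisj u v j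
  have hSadd : norm2 (b1 + b2) ^ 2 = S := by
    rw [norm2_sq, hS, ← sq_sum_emb J1 u, ← sq_sum_emb J2 v, ← hb1, ← hb2]
    have : ∀ j, (b1 j + b2 j) ^ 2 = b1 j ^ 2 + b2 j ^ 2 + 2 * (b1 j * b2 j) :=
      fun j => by ring
    simp only [Pi.add_apply]
    rw [Finset.sum_congr rfl fun j _ => this j, Finset.sum_add_distrib,
      Finset.sum_add_distrib, ← Finset.mul_sum, hcross0]
    ring
  have hSsub : norm2 (b1 - b2) ^ 2 = S := by
    rw [norm2_sq, hS, ← sq_sum_emb J1 u, ← sq_sum_emb J2 v, ← hb1, ← hb2]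
    have : ∀ j, (b1 j - b2 j) ^ 2 = b1 j ^ 2 + b2 j ^ 2 - 2 * (b1 j * b2 j) :=
      fun j => by ring
    simp only [Pi.sub_apply]
    rw [Finset.sum_congr rfl fun j _ => this j, Finset.sum_sub_distrib,
      Finset.sum_add_distrib, ← Finset.mul_sum, hcross0]
    ring
  have h1 := (hRIP (b1 + b2) hs1).2
  have h2 := (hRIP (b1 - b2) hs2).1
  rw [hSadd] at h1
  rw [hSsub] at h2
  set Mu := (colSub X J1).mulVec u with hMu
  set Nv := (colSub X J2).mulVec v with hNv
  have hXadd : X.mulVec (b1 + b2) = fun i => Mu i + Nv i := by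
    rw [Matrix.mulVec_add, hb1, hb2, mulVec_emb, mulVec_emb]
    rfl
  have hXsub : X.mulVec (b1 - b2) = fun i => Mu i - Nv i := by
    rw [Matrix.mulVec_sub, hb1, hb2, mulVec_emb, mulVec_emb]
    rfl
  have e1 : norm2 (X.mulVec (b1 + b2)) ^ 2 = ∑ i, (Mu i + Nv i) ^ 2 := by
    rw [norm2_sq, hXadd]
  have e2 : norm2 (X.mulVec (b1 - b2)) ^ 2 = ∑ i, (Mu i - Nv i) ^ 2 := by
    rw [norm2_sq, hXsub]
  rw [e1] at h1
  rw [e2] at h2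
  have hpar : ∑ i, (Mu i + Nv i) ^ 2 - ∑ i, (Mu i - Nv i) ^ 2 =
      4 * ∑ i, Mu i * Nv i := by
    rw [← Finset.sum_sub_distrib, Finset.mul_sum]
    exact Finset.sum_congr rfl fun i _ => by ring
  have h3 : (1 + δ) * S - (1 - δ) * S = 2 * (δ * S) := by ring
  clear_value S Mu Nv
  linarith

/-- Scaled cross bound. -/
lemma cross_bound_scaled {n p k : ℕ} {δ : ℝ} (X : Matrix (Fin n) (Fin p) ℝ)
    (hδ0 : 0 ≤ δ) (hRIP : RIPwith X k δ) {J1 J2 : Finset (Fin p)}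
    (hdisj : Disjoint J1 J2) (hcard : (J1 ∪ J2).card ≤ k)
    (u : J1 → ℝ) (v : J2 → ℝ) :
    ∑ i, ((colSub X J1).mulVec u) i * ((colSub X J2).mulVec v) i ≤
      δ * norm2 u * norm2 v := by
  rcases eq_or_lt_of_le (norm2_nonneg u) with h0u | hu
  · -- u = 0
    have hsum : ∑ j : J1, (u j) ^ 2 = 0 := by
      have := norm2_sq u
      rw [← h0u] at this
      simpa using this.symm
    have hu0 : ∀ j, u j = 0 := by
      intro j
      have := (Finset.sum_eq_zero_iff_of_nonneg
        (fun j _ => sq_nonneg (u j))).mp hsum j (Finset.mem_univ j)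
      exact pow_eq_zero_iff (n := 2) (by norm_num) |>.mp this
    have : (colSub X J1).mulVec u = 0 := by
      funext i
      simp [Matrix.mulVec, dotProduct, hu0]
    rw [this]
    simp [mul_nonneg (mul_nonneg hδ0 (norm2_nonneg u)) (norm2_nonneg v)]
  rcases eq_or_lt_of_le (norm2_nonneg v) with h0v | hv
  · have hsum : ∑ j : J2, (v j) ^ 2 = 0 := by
      have := norm2_sq v
      rw [← h0v] at this
      simpa using this.symm
    have hv0 : ∀ j, v j = 0 := by
      intro j
      have := (Finset.sum_eq_zero_iff_of_nonneg
        (fun j _ => sq_nonneg (v j))).mp hsum j (Finset.mem_univ j)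
      exact pow_eq_zero_iff (n := 2) (by norm_num) |>.mp this
    have : (colSub X J2).mulVec v = 0 := by
      funext i
      simp [Matrix.mulVec, dotProduct, hv0]
    rw [this]
    simp [mul_nonneg (mul_nonneg hδ0 (norm2_nonneg u)) (norm2_nonneg v)]
  -- main case
  set α := norm2 u with hα
  set β := norm2 v with hβ
  set c := Real.sqrt (β / α) with hc
  have hcpos : 0 < c := Real.sqrt_pos.mpr (div_pos hv hu)
  have hc2 : c ^ 2 = β / α := Real.sq_sqrt (le_of_lt (div_pos hv hu))
  have hSu : ∑ j : J1, (u j) ^ 2 = α ^ 2 := (norm2_sq u).symm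
  have hSv : ∑ j : J2, (v j) ^ 2 = β ^ 2 := (norm2_sq v).symm
  have key := cross_bound X hRIP hdisj hcard (c • u) (c⁻¹ • v)
  have hM : (colSub X J1).mulVec (c • u) = c • (colSub X J1).mulVec u :=
    Matrix.mulVec_smul _ _ _
  have hN : (colSub X J2).mulVec (c⁻¹ • v) = c⁻¹ • (colSub X J2).mulVec v :=
    Matrix.mulVec_smul _ _ _
  rw [hM, hN] at key
  have hL : ∑ i, (c • (colSub X J1).mulVec u) i * (c⁻¹ • (colSub X J2).mulVec v) i
      = ∑ i, ((colSub X J1).mulVec u) i * ((colSub X J2).mulVec v) i := by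
    refine Finset.sum_congr rfl fun i _ => ?_
    simp only [Pi.smul_apply, smul_eq_mul]
    field_simp
  have hSu' : ∑ j : J1, ((c • u) j) ^ 2 = c ^ 2 * α ^ 2 := by
    simp only [Pi.smul_apply, smul_eq_mul, mul_pow]
    rw [← Finset.mul_sum, hSu]
  have hSv' : ∑ j : J2, ((c⁻¹ • v) j) ^ 2 = (c ^ 2)⁻¹ * β ^ 2 := by
    simp only [Pi.smul_apply, smul_eq_mul, mul_pow]
    rw [← Finset.mul_sum, hSv, inv_pow]
  rw [hL, hSu', hSv', hc2] at key
  have hαβ : (β / α) * α ^ 2 + (β / α)⁻¹ * β ^ 2 = 2 * (α * β) := by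
    field_simp
    ring
  calc ∑ i, ((colSub X J1).mulVec u) i * ((colSub X J2).mulVec v) i
      ≤ δ * ((β / α) * α ^ 2 + (β / α)⁻¹ * β ^ 2) / 2 := key
    _ = δ * α * β := by rw [hαβ]; ring

/-- RIP off-diagonal bound: for disjoint `J₁, J₂` with `|J₁ ∪ J₂| ≤ k`,
`‖X_{J₁}ᵀ X_{J₂} a‖₂ ≤ δ_k ‖a‖₂`. -/
theorem rip_cross_bound {n p : ℕ} (X : Matrix (Fin n) (Fin p) ℝ)
    (k : ℕ) (δ : ℝ) (hδ0 : 0 ≤ δ) (hRIP : RIPwith X k δ)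
    (J1 J2 : Finset (Fin p)) (hdisj : Disjoint J1 J2)
    (hcard : (J1 ∪ J2).card ≤ k) (a : J2 → ℝ) :
    norm2 (((colSub X J1)ᵀ * colSub X J2).mulVec a) ≤ δ * norm2 a := by
  set w := ((colSub X J1)ᵀ * colSub X J2).mulVec a with hw
  have hw' : w = (colSub X J1)ᵀ.mulVec ((colSub X J2).mulVec a) := by
    rw [hw, Matrix.mulVec_mulVec]
  have key : norm2 w ^ 2 =
      ∑ i, ((colSub X J1).mulVec w) i * ((colSub X J2).mulVec a) i := by
    rw [norm2_sq]
    set y := (colSub X J2).mulVec a with hy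
    calc ∑ j : J1, (w j) ^ 2
        = ∑ j : J1, w j * (colSub X J1)ᵀ.mulVec y j := by
          refine Finset.sum_congr rfl fun j _ => ?_
          rw [sq]
          congr 1
          exact congrFun hw' j
      _ = ∑ i, ((colSub X J1).mulVec w) i * y i := by
          simp only [Matrix.mulVec, dotProduct, Matrix.transpose_apply,
            Finset.mul_sum, Finset.sum_mul]
          rw [Finset.sum_comm]
          exact Finset.sum_congr rfl fun i _ =>
            Finset.sum_congr rfl fun j _ => by ring
  have bound := cross_bound_scaled X hδ0 hRIP hdisj hcard w a
  rw [← key] at bound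
  rcases eq_or_lt_of_le (norm2_nonneg w) with h0 | hpos
  · rw [← h0]
    exact mul_nonneg hδ0 (norm2_nonneg a)
  · nlinarith [bound, hpos]
end

section
/- If ε₂ ≤ min(ε_sup, ε_sig), where ε_sig = √(1−δ_{k_sup}) β_min / (1 + (√(1+δ_{k_sup})/√(1−δ_{k_sup}))(2 + β_max/β_min)), then (√(1−δ_{k_sup}) β_min − ε₂)/(√(1+δ_{k_sup})(β_max + β_min) + ε₂) ≥ ε₂/(√(1−δ_{k_sup}) β_min − ε₂); i.e., the lower bound on RR(k) for k < k_* exceeds the upper bound on RR(k_*). -/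
/-- If `ε₂ ≤ min(ε_sup, ε_sig)` with
`ε_sig = √(1−δ)β_min / (1 + (√(1+δ)/√(1−δ))(2 + β_max/β_min))`, then the lower
bound on `RR(k)` for `k < k_*` exceeds the upper bound on `RR(k_*)`:
`(√(1−δ)β_min − ε₂)/(√(1+δ)(β_max+β_min)+ε₂) ≥ ε₂/(√(1−δ)β_min − ε₂)`. -/
theorem separation_inequality
    (δ ε₂ εsup βmin βmax : ℝ)
    (hδ0 : 0 ≤ δ) (hδ1 : δ < 1) (hβmin : 0 < βmin) (hββ : βmin ≤ βmax)
    (hε0 : 0 < ε₂)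
    (hε : ε₂ ≤ min εsup
      (Real.sqrt (1 - δ) * βmin /
        (1 + (Real.sqrt (1 + δ) / Real.sqrt (1 - δ)) * (2 + βmax / βmin)))) :
    ε₂ / (Real.sqrt (1 - δ) * βmin - ε₂) ≤
      (Real.sqrt (1 - δ) * βmin - ε₂) /
        (Real.sqrt (1 + δ) * (βmax + βmin) + ε₂) := by
  set a := Real.sqrt (1 - δ) with ha
  set b := Real.sqrt (1 + δ) with hb
  have ha0 : 0 < a := Real.sqrt_pos.2 (by linarith)
  have hb0 : 0 < b := Real.sqrt_pos.2 (by linarith)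
  have hab : a ≤ b := Real.sqrt_le_sqrt (by linarith)
  have hD : (0:ℝ) < 1 + (b / a) * (2 + βmax / βmin) := by
    have : 0 < b / a := div_pos hb0 ha0
    have : 0 < βmax / βmin := div_pos (lt_of_lt_of_le hβmin hββ) hβmin
    positivity
  have hε2 : ε₂ ≤ a * βmin / (1 + (b / a) * (2 + βmax / βmin)) :=
    le_trans hε (min_le_right _ _)
  have key : ε₂ * (1 + (b / a) * (2 + βmax / βmin)) ≤ a * βmin :=
    (le_div_iff₀ hD).1 hε2
  -- clear divisions: multiply key by a * βmin
  have hident : (1 + (b / a) * (2 + βmax / βmin)) * (a * βmin)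
      = a * βmin + 2 * (b * βmin) + b * βmax := by
    field_simp
    ring
  have key2 : ε₂ * (a * βmin + 2 * (b * βmin) + b * βmax) ≤ (a * βmin) * (a * βmin) := by
    nlinarith [mul_le_mul_of_nonneg_right key (le_of_lt (mul_pos ha0 hβmin))]
  have hD1 : 1 < 1 + (b / a) * (2 + βmax / βmin) := by
    have h4 : 0 < βmax / βmin := div_pos (lt_of_lt_of_le hβmin hββ) hβmin
    have h3 : 0 < (b / a) * (2 + βmax / βmin) :=
      mul_pos (div_pos hb0 ha0) (by linarith)
    linarith
  have hlt : ε₂ < a * βmin := by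
    have := mul_lt_mul_of_pos_left hD1 hε0
    linarith
  have hden1 : 0 < a * βmin - ε₂ := by linarith
  have hden2 : 0 < b * (βmax + βmin) + ε₂ := by
    have := mul_pos hb0 (by linarith : (0:ℝ) < βmax + βmin); linarith
  rw [div_le_div_iff₀ hden1 hden2]
  nlinarith [mul_le_mul_of_nonneg_left hab (le_of_lt hβmin)]
end

section
/- Suppose Î ⊇ I with |Î| = k_* ≤ 2k₀, δ_{2k₀} < 1, and let β̂ be defined by β̂_Î = X_Î^†(Xβ + w), β̂_{Î^C} = 0 with supp(β) = I and ‖w‖₂ ≤ ε₂. Then ‖β − β̂‖₂ ≤ ε₂/√(1−δ_{2k₀}). -/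
open scoped Classical
open Matrix

/-- Oracle error bound for superset estimates: if `I ⊆ Î`, `|Î| = k_* ≤ 2k₀`,
`δ_{2k₀} < 1`, `y = Xβ + w` with `supp(β) = I` and `‖w‖₂ ≤ ε₂`, and `β̂` is the
least squares estimate on `Î` (zero off `Î`), then
`‖β − β̂‖₂ ≤ ε₂/√(1−δ_{2k₀})`. -/
theorem superset_oracle_bound {n p : ℕ} (X : Matrix (Fin n) (Fin p) ℝ)
    (k₀ : ℕ) (δ : ℝ) (hδ0 : 0 ≤ δ) (hδ1 : δ < 1) (hRIP : RIPwith X (2 * k₀) δ)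
    (β : Fin p → ℝ) (I : Finset (Fin p)) (hsupp : ∀ j, β j ≠ 0 ↔ j ∈ I)
    (Ihat : Finset (Fin p)) (hII : I ⊆ Ihat) (hcard : Ihat.card ≤ 2 * k₀)
    (hfull : ((colSub X Ihat)ᵀ * colSub X Ihat) * ((colSub X Ihat)ᵀ * colSub X Ihat)⁻¹ = 1)
    (w : Fin n → ℝ) (ε₂ : ℝ) (hw : norm2 w ≤ ε₂)
    (y : Fin n → ℝ) (hy : y = X.mulVec β + w)
    (βhat : Fin p → ℝ)
    (hβhat_off : ∀ j ∉ Ihat, βhat j = 0)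
    (hβhat_on : ∀ j (hj : j ∈ Ihat), βhat j = (pinv X Ihat).mulVec y ⟨j, hj⟩) :
    norm2 (β - βhat) ≤ ε₂ / Real.sqrt (1 - δ) := by
  classical
  set A := colSub X Ihat with hA
  set M := Aᵀ * A with hM
  have hinv : M⁻¹ * M = 1 := mul_eq_one_comm.mp hfull
  -- β vanishes off I (hence off Ihat)
  have hβ0 : ∀ j, j ∉ Ihat → β j = 0 := fun j hj => by
    by_contra h; exact hj (hII ((hsupp j).mp h))
  -- reduction of mulVec to the submatrix
  have hred : ∀ (c : Fin p → ℝ), (∀ j, j ∉ Ihat → c j = 0) →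
      X.mulVec c = A.mulVec (fun j : Ihat => c j) := by
    intro c hc
    funext i
    simp only [Matrix.mulVec, dotProduct]
    rw [← Finset.sum_subset (Finset.subset_univ Ihat)
      (fun j _ hj => by rw [hc j hj, mul_zero])]
    rw [← Finset.sum_attach Ihat (fun j => X i j * c j)]
    rfl
  -- the noise image u and its zero-extension v
  set u : Ihat → ℝ := (pinv X Ihat).mulVec w with hu
  set v : Fin p → ℝ := fun j => if h : j ∈ Ihat then u ⟨j, h⟩ else 0 with hv
  have hβX : X.mulVec β = A.mulVec (fun j : Ihat => β j) := hred β hβ0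
  -- βhat on Ihat equals β + u
  have hdiff : β - βhat = -v := by
    funext j
    by_cases hj : j ∈ Ihat
    · have : βhat j = (pinv X Ihat).mulVec y ⟨j, hj⟩ := hβhat_on j hj
      have hyv : (pinv X Ihat).mulVec y = (fun j : Ihat => β j) + u := by
        rw [hy, Matrix.mulVec_add, hβX, Matrix.mulVec_mulVec]
        congr 1
        have : pinv X Ihat * A = 1 := by
          rw [pinv, ← hA, ← hM, Matrix.mul_assoc, ← hM, hinv]
        rw [this, Matrix.one_mulVec]
      simp only [Pi.sub_apply, Pi.neg_apply, this, hyv, Pi.add_apply, hv, dif_pos hj]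
      ring
    · simp only [Pi.sub_apply, Pi.neg_apply, hβ0 j hj, hβhat_off j hj, hv, dif_neg hj]
      ring
  have hnormeq : norm2 (β - βhat) = norm2 v := by
    rw [hdiff]; unfold norm2; congr 1; apply Finset.sum_congr rfl; intro i _
    simp [neg_pow]
  -- v is sparse
  have hsparse : KSparse (2 * k₀) v := by
    unfold KSparse
    refine le_trans (Finset.card_le_card ?_) hcard
    intro j hj
    simp only [Finset.mem_filter, Finset.mem_univ, true_and] at hj
    by_contra h
    exact hj (by simp [hv, dif_neg h])
  -- X v = P w where P = projMat
  have hXv : X.mulVec v = (projMat X Ihat).mulVec w := by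
    have : X.mulVec v = A.mulVec (fun j : Ihat => v j) :=
      hred v (fun j hj => by simp [hv, dif_neg hj])
    rw [this]
    have : (fun j : Ihat => v j) = u := by
      funext j; simp [hv, dif_pos j.2]
    rw [this, hu, projMat, Matrix.mulVec_mulVec]
  -- projection properties
  set P := projMat X Ihat with hP
  have hPsymm : Pᵀ = P := by
    rw [hP, projMat, pinv, ← hA, ← hM]
    rw [Matrix.transpose_mul, Matrix.transpose_mul, Matrix.transpose_transpose,
      Matrix.transpose_nonsing_inv]
    have hMT : Mᵀ = M := by rw [hM, Matrix.transpose_mul, Matrix.transpose_transpose]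
    rw [hMT, Matrix.mul_assoc]
  have hPP : P * P = P := by
    rw [hP, projMat, pinv, ← hA, ← hM]
    calc A * (M⁻¹ * Aᵀ) * (A * (M⁻¹ * Aᵀ))
        = A * (M⁻¹ * (M * (M⁻¹ * Aᵀ))) := by
          simp only [Matrix.mul_assoc, hM]
      _ = A * (M⁻¹ * Aᵀ) := by rw [← Matrix.mul_assoc M, hfull, Matrix.one_mul]
  -- ‖P w‖ ≤ ‖w‖
  set q := P.mulVec w with hq
  have hqq : ∑ i, q i ^ 2 = ∑ i, q i * w i := by
    have h1 : q ⬝ᵥ q = q ⬝ᵥ w := by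
      conv_lhs => rw [hq]
      rw [Matrix.dotProduct_mulVec, ← Matrix.mulVec_transpose, hPsymm, hq,
        Matrix.mulVec_mulVec, hPP]
    simpa [dotProduct, pow_two] using h1
  have hqw : norm2 q ≤ norm2 w := by
    have hcs := Finset.sum_mul_sq_le_sq_mul_sq Finset.univ q w
    have hS : (∑ i, q i ^ 2) * (∑ i, q i ^ 2) ≤ (∑ i, q i ^ 2) * ∑ i, w i ^ 2 := by
      calc (∑ i, q i ^ 2) * (∑ i, q i ^ 2) = (∑ i, q i * w i) ^ 2 := by rw [hqq]; ring
        _ ≤ _ := hcs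
    rcases le_or_gt (∑ i, q i ^ 2) 0 with h | h
    · unfold norm2
      rw [Real.sqrt_eq_zero'.mpr h]
      exact Real.sqrt_nonneg _
    · exact Real.sqrt_le_sqrt (le_of_mul_le_mul_left hS h)
  -- now the RIP bound
  have hrip := (hRIP v hsparse).1
  rw [hXv] at hrip
  have hε0 : 0 ≤ ε₂ := le_trans (Real.sqrt_nonneg _) hw
  have h1δ : 0 < 1 - δ := by linarith
  have hnv : 0 ≤ norm2 v := Real.sqrt_nonneg _
  have hq2w2 : (norm2 q) ^ 2 ≤ ε₂ ^ 2 := by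
    have : norm2 q ≤ ε₂ := le_trans hqw hw
    exact pow_le_pow_left₀ (Real.sqrt_nonneg _) this 2
  have hv2 : (norm2 v) ^ 2 ≤ ε₂ ^ 2 / (1 - δ) := by
    rw [le_div_iff₀ h1δ]
    calc (norm2 v) ^ 2 * (1 - δ) = (1 - δ) * (norm2 v) ^ 2 := by ring
      _ ≤ (norm2 q) ^ 2 := hrip
      _ ≤ ε₂ ^ 2 := hq2w2
  rw [hnormeq]
  have : norm2 v ≤ Real.sqrt (ε₂ ^ 2 / (1 - δ)) := by
    have := Real.sqrt_le_sqrt hv2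
    rwa [Real.sqrt_sq hnv] at this
  calc norm2 v ≤ Real.sqrt (ε₂ ^ 2 / (1 - δ)) := this
    _ = ε₂ / Real.sqrt (1 - δ) := by
        rw [Real.sqrt_div (sq_nonneg ε₂), Real.sqrt_sq hε0]
end
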